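/- arXiv:0909.2468 — 6 statements merged into one kernel-verified Lean document; each statement's English description precedes it below -/
import Mathlib

section
/- Let G be a 3-free finite simple digraph, let 0 ≤ μ ≤ 1 be real, and let v be a vertex with C(v) ≠ ∅. If g(v) ≥ |C(v)|²·(1+μ)·( (1+μ + √((1+μ)² + 4(1+μ)e(v)/|C(v)|²))/2 + e(v)/|C(v)|² ), then there exists a partition V = V1 ∪ V2 ∪ {v} with B(v) ⊆ V1 and A(v) ⊆ V2 such that the number of missing edges of the partition is at least (1+μ) times the number of decycling edges of the partition; in fact the canonical partition at v has this property. -/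
open Finset

variable {V : Type*}

/-- A digraph (given by its edge relation) is acyclic if no vertex lies on a
directed cycle, i.e. no vertex reaches itself by a nonempty directed walk. -/
def Acyclic (E : V → V → Prop) : Prop := ∀ v : V, ¬ Relation.TransGen E v v

/-- A digraph is `3`-free if it has no directed cycle of length at most three:
no loops, no digons, and no directed triangles. -/
def ThreeFree (E : V → V → Prop) : Prop :=
  (∀ a, ¬ E a a) ∧ (∀ a b, E a b → ¬ E b a) ∧ (∀ a b c, E a b → E b c → ¬ E c a)

variable [Fintype V] [DecidableEq V]

/-- The finset of (directed) edges of the digraph. -/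
def edgeFinset (E : V → V → Prop) [DecidableRel E] : Finset (V × V) :=
  Finset.univ.filter fun p => E p.1 p.2

/-- `beta E` is the minimum number of edges whose removal leaves an acyclic digraph. -/
noncomputable def beta (E : V → V → Prop) [DecidableRel E] : ℕ :=
  sInf {n | ∃ X ⊆ edgeFinset E, X.card = n ∧
    Acyclic (fun a b => E a b ∧ (a, b) ∉ X)}

/-- `gamma E` is the number of unordered pairs of distinct nonadjacent vertices. -/
def gamma (E : V → V → Prop) [DecidableRel E] : ℕ :=
  (Finset.univ.filter fun p : V × V =>
    p.1 ≠ p.2 ∧ ¬ E p.1 p.2 ∧ ¬ E p.2 p.1).card / 2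

/-- `outN E v` is the set `A(v)` of out-neighbors of `v`. -/
def outN (E : V → V → Prop) [DecidableRel E] (v : V) : Finset V :=
  Finset.univ.filter fun w => E v w

/-- `inN E v` is the set `B(v)` of in-neighbors of `v`. -/
def inN (E : V → V → Prop) [DecidableRel E] (v : V) : Finset V :=
  Finset.univ.filter fun w => E w v

/-- `Cset E v` is `C(v) = V \ (A(v) ∪ B(v) ∪ {v})`. -/
def Cset (E : V → V → Prop) [DecidableRel E] (v : V) : Finset V :=
  Finset.univ \ (outN E v ∪ inN E v ∪ {v})

/-- `gmiss E v` is `g(v)`, the number of pairs `(a,b)` with `a ∈ A(v)`, `b ∈ B(v)`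
which are nonadjacent. -/
def gmiss (E : V → V → Prop) [DecidableRel E] (v : V) : ℕ :=
  (((outN E v) ×ˢ (inN E v)).filter fun p => ¬ E p.1 p.2 ∧ ¬ E p.2 p.1).card

/-- `kdeg E v u` is `k_v(u) = |{w ∈ A(v) : (w,u) ∈ E}|`. -/
def kdeg (E : V → V → Prop) [DecidableRel E] (v u : V) : ℕ :=
  ((outN E v).filter fun w => E w u).card

/-- `ldeg E v u` is `l_v(u) = |{w ∈ B(v) : (u,w) ∈ E}|`. -/
def ldeg (E : V → V → Prop) [DecidableRel E] (v u : V) : ℕ :=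
  ((inN E v).filter fun w => E u w).card

/-- `CBset E v` is `C_{B(v)} = {u ∈ C(v) : l_v(u) > k_v(u)}`. -/
def CBset (E : V → V → Prop) [DecidableRel E] (v : V) : Finset V :=
  (Cset E v).filter fun u => kdeg E v u < ldeg E v u

/-- `CAset E v` is `C_{A(v)} = C(v) \ C_{B(v)}`. -/
def CAset (E : V → V → Prop) [DecidableRel E] (v : V) : Finset V :=
  Cset E v \ CBset E v

/-- `eCC E v` is `e(v)`, the number of edges from `C_{A(v)}` to `C_{B(v)}`. -/
def eCC (E : V → V → Prop) [DecidableRel E] (v : V) : ℕ :=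
  ((CAset E v ×ˢ CBset E v).filter fun p => E p.1 p.2).card

/-- `Msum E v` is `M(v) = ∑_{u ∈ C(v)} min(k_v(u), l_v(u))`. -/
def Msum (E : V → V → Prop) [DecidableRel E] (v : V) : ℕ :=
  ∑ u ∈ Cset E v, min (kdeg E v u) (ldeg E v u)

/-- `V1`, `V2`, `{v}` form a partition of the vertex set into disjoint parts. -/
def IsPartitionAt (V1 V2 : Finset V) (v : V) : Prop :=
  Disjoint V1 V2 ∧ v ∉ V1 ∧ v ∉ V2 ∧ V1 ∪ V2 ∪ {v} = Finset.univ

/-- The number of decycling edges of a partition `V1, V2, {v}`: edges from `V2` to `V1`. -/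
def decyclingCount (E : V → V → Prop) [DecidableRel E] (V1 V2 : Finset V) : ℕ :=
  ((V2 ×ˢ V1).filter fun p => E p.1 p.2).card

/-- The number of missing edges of a partition `V1, V2, {v}`: unordered pairs of
distinct nonadjacent vertices not both in `V1` and not both in `V2`. -/
def missingCount (E : V → V → Prop) [DecidableRel E] (V1 V2 : Finset V) : ℕ :=
  (Finset.univ.filter fun p : V × V =>
    p.1 ≠ p.2 ∧ ¬ E p.1 p.2 ∧ ¬ E p.2 p.1 ∧
    ¬ (p.1 ∈ V1 ∧ p.2 ∈ V1) ∧ ¬ (p.1 ∈ V2 ∧ p.2 ∈ V2)).card / 2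

/-! The decycling edges of the canonical partition run from `A(v)` to `C_B`, from `C_A` to `B(v)`
and from `C_A` to `C_B` (an edge `A(v) → B(v)` closes a triangle through `v`); by the choice of
`C_A` and `C_B` there are `M(v) + e(v)` of them, where `M(v) = ∑_{u ∈ C(v)} min (k_v(u), l_v(u))`.
Since `k_v(u) l_v(u) ≤ g(v)`, we get `M(v) ≤ |C(v)| √g(v)`, and the `g(v)` nonadjacent pairs of
`A(v) × B(v)` are missing edges. So it suffices that `(1 + μ) (|C(v)| √g(v) + e(v)) ≤ g(v)`, and the
hypothesis says precisely that `√g(v)` is at least the positive root of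
`X² - (1 + μ) |C(v)| X - (1 + μ) e(v)`. -/

section Counting

variable {α β : Type*}

lemma card_filter_product (s : Finset α) (t : Finset β) (P : α → β → Prop)
    [∀ a b, Decidable (P a b)] :
    ((s ×ˢ t).filter fun p => P p.1 p.2).card = ∑ a ∈ s, ∑ b ∈ t, if P a b then 1 else 0 := by
  rw [card_filter, sum_product]

lemma two_mul_card_le_card_of_swap [DecidableEq α] {S T : Finset (α × α)} (hST : S ⊆ T)
    (hT : ∀ p ∈ T, p.swap ∈ T) (hS : ∀ p ∈ S, p.swap ∉ S) : 2 * S.card ≤ T.card := by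
  have hdisj : Disjoint S (S.image Prod.swap) := by
    rw [disjoint_left]
    intro p hp hp'
    obtain ⟨q, hq, rfl⟩ := mem_image.1 hp'
    exact hS q hq (by simpa using hp)
  calc 2 * S.card = (S ∪ S.image Prod.swap).card := by
        rw [card_union_of_disjoint hdisj, card_image_of_injective _ Prod.swap_injective]; ring
    _ ≤ T.card := card_le_card <| union_subset hST <| by
        intro p hp
        obtain ⟨q, hq, rfl⟩ := mem_image.1 hp
        exact hT q (hST hq)

end Counting

lemma mul_add_le_sq_of_root_le {s n e t y : ℝ} (hroot : t ^ 2 = s * n * t + s * e)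
    (hnt : s * n ≤ 2 * t) (hty : t ≤ y) : s * (n * y + e) ≤ y ^ 2 := by
  -- `y ^ 2 - s * n * y - s * e = (y - t) * (y + t - s * n)`
  nlinarith [mul_nonneg (sub_nonneg.2 hty) (show 0 ≤ y + t - s * n by linarith)]

lemma mul_add_sqrt_le_of_threshold_le {s n e g : ℝ} (hs : 0 ≤ s) (hn : 0 < n) (he : 0 ≤ e)
    (hg : n ^ 2 * s * ((s + √(s ^ 2 + 4 * s * e / n ^ 2)) / 2 + e / n ^ 2) ≤ g) :
    s * (n * √g + e) ≤ g := by
  set r := √(s ^ 2 + 4 * s * e / n ^ 2)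
  have hr : n ^ 2 * r ^ 2 = n ^ 2 * s ^ 2 + 4 * s * e := by
    rw [Real.sq_sqrt (by positivity)]
    field_simp
  set t := n * ((s + r) / 2)
  have hroot : t ^ 2 = s * n * t + s * e := by
    linear_combination hr / 4
  have ht : t ^ 2 ≤ g := by
    convert hg using 1
    rw [hroot]
    field_simp
    ring
  have hnt : s * n ≤ 2 * t := by
    have : 0 ≤ n * r := by positivity
    simp only [t]
    linarith
  have := mul_add_le_sq_of_root_le hroot hnt (Real.le_sqrt_of_sq_le ht)
  rwa [Real.sq_sqrt (le_trans (by positivity) hg)] at this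

section Canonical

variable {E : V → V → Prop} [DecidableRel E] {v u : V}

@[simp] lemma mem_Cset : u ∈ Cset E v ↔ u ≠ v ∧ ¬E v u ∧ ¬E u v := by
  simp [Cset, outN, inN, not_or]

@[simp] lemma mem_CBset : u ∈ CBset E v ↔ u ∈ Cset E v ∧ kdeg E v u < ldeg E v u := mem_filter

@[simp] lemma mem_CAset : u ∈ CAset E v ↔ u ∈ Cset E v ∧ ldeg E v u ≤ kdeg E v u := by
  simp +contextual [CAset]

lemma isPartitionAt_canonical (h3 : ThreeFree E) (v : V) :
    IsPartitionAt (inN E v ∪ CBset E v) (outN E v ∪ CAset E v) v := by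
  obtain ⟨hloop, hdigon, -⟩ := h3
  refine ⟨disjoint_left.2 fun w => ?_, ?_, ?_, eq_univ_of_forall fun w => ?_⟩
  · simp only [mem_union, mem_CBset, mem_CAset, mem_Cset, outN, inN, mem_filter, mem_univ, true_and]
    grind
  · simp [hloop, inN]
  · simp [hloop, outN]
  · simp only [mem_union, mem_CBset, mem_CAset, mem_Cset, outN, inN, mem_filter, mem_univ, true_and,
      mem_singleton]
    grind

lemma Msum_eq_sum_CAset_add_sum_CBset (v : V) :
    Msum E v = ∑ u ∈ CAset E v, ldeg E v u + ∑ u ∈ CBset E v, kdeg E v u := by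
  rw [Msum, ← sum_sdiff (show CBset E v ⊆ Cset E v from filter_subset _ _)]
  congr 1
  · exact sum_congr rfl fun u hu => min_eq_right (mem_CAset.1 hu).2
  · exact sum_congr rfl fun u hu => min_eq_left (mem_CBset.1 hu).2.le

lemma decyclingCount_canonical (h3 : ThreeFree E) (v : V) :
    decyclingCount E (inN E v ∪ CBset E v) (outN E v ∪ CAset E v) = Msum E v + eCC E v := by
  have hA : Disjoint (outN E v) (CAset E v) := by
    rw [disjoint_left]
    intro w
    simp only [outN, mem_filter, mem_univ, true_and, mem_CAset, mem_Cset]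
    grind
  have hB : Disjoint (inN E v) (CBset E v) := by
    rw [disjoint_left]
    intro w
    simp only [inN, mem_filter, mem_univ, true_and, mem_CBset, mem_Cset]
    grind
  have hAB : ∑ a ∈ outN E v, ∑ b ∈ inN E v, (if E a b then 1 else 0) = 0 :=
    sum_eq_zero fun a ha => sum_eq_zero fun b hb => if_neg fun hab =>
      h3.2.2 v a b (by simpa [outN] using ha) hab (by simpa [inN] using hb)
  rw [decyclingCount, eCC, card_filter_product, card_filter_product,
    Msum_eq_sum_CAset_add_sum_CBset]
  simp only [sum_union hA, sum_union hB, sum_add_distrib, hAB, zero_add, kdeg, ldeg, card_filter]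
  rw [sum_comm (s := outN E v)]
  ring

lemma gmiss_le_missingCount {V1 V2 : Finset V} (hB : inN E v ⊆ V1) (hA : outN E v ⊆ V2)
    (hV : Disjoint V1 V2) : gmiss E v ≤ missingCount E V1 V2 := by
  rw [gmiss, missingCount, Nat.le_div_iff_mul_le two_pos, mul_comm]
  apply two_mul_card_le_card_of_swap
  · intro p hp
    simp only [mem_filter, mem_product, mem_univ, true_and] at hp ⊢
    have h1 := disjoint_left.1 hV (hB hp.1.2)
    have h2 := disjoint_right.1 hV (hA hp.1.1)
    refine ⟨fun h => h1 (h ▸ hA hp.1.1), hp.2.1, hp.2.2, fun h => h2 h.1, fun h => h1 h.2⟩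
  · intro p hp
    simp only [mem_filter, mem_univ, true_and, Prod.fst_swap, Prod.snd_swap] at hp ⊢
    tauto
  · intro p hp hp'
    simp only [mem_filter, mem_product, Prod.fst_swap] at hp hp'
    exact disjoint_left.1 hV (hB hp'.1.2) (hA hp.1.1)

lemma Msum_le_card_mul_sqrt_gmiss (h3 : ThreeFree E) (v : V) :
    (Msum E v : ℝ) ≤ (Cset E v).card * √(gmiss E v) := by
  -- an out-neighbour of `v` into `u` and an in-neighbour of `v` out of `u` are nonadjacent,
  -- since an edge between them would close a directed triangle
  have hkl : ∀ u, kdeg E v u * ldeg E v u ≤ gmiss E v := fun u => by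
    rw [kdeg, ldeg, gmiss, ← card_product]
    refine card_le_card fun p hp => ?_
    simp only [mem_product, mem_filter, outN, inN, mem_univ, true_and] at hp ⊢
    obtain ⟨⟨hva, hau⟩, hbv, hub⟩ := hp
    exact ⟨⟨hva, hbv⟩, fun hab => h3.2.2 v p.1 p.2 hva hab hbv,
      fun hba => h3.2.2 p.1 u p.2 hau hub hba⟩
  rw [Msum, Nat.cast_sum, ← nsmul_eq_mul]
  refine sum_le_card_nsmul _ _ _ fun u _ => Real.le_sqrt_of_sq_le ?_
  calc ((min (kdeg E v u) (ldeg E v u) : ℕ) : ℝ) ^ 2 ≤ (kdeg E v u * ldeg E v u : ℕ) := by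
        push_cast
        rw [sq]
        exact mul_le_mul (min_le_left _ _) (min_le_right _ _) (by positivity) (by positivity)
    _ ≤ gmiss E v := by exact_mod_cast hkl u

end Canonical

theorem stmt2_general (E : V → V → Prop) [DecidableRel E] (h3 : ThreeFree E)
    (μ : ℝ) (hμ0 : 0 ≤ μ) (v : V) (hC : Cset E v ≠ ∅)
    (hg : (gmiss E v : ℝ) ≥ ((Cset E v).card : ℝ) ^ 2 * (1 + μ) *
      ((1 + μ + Real.sqrt ((1 + μ) ^ 2 +
          4 * (1 + μ) * (eCC E v : ℝ) / ((Cset E v).card : ℝ) ^ 2)) / 2 +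
        (eCC E v : ℝ) / ((Cset E v).card : ℝ) ^ 2)) :
    (∃ (V1 V2 : Finset V), IsPartitionAt V1 V2 v ∧
      inN E v ⊆ V1 ∧ outN E v ⊆ V2 ∧
      (missingCount E V1 V2 : ℝ) ≥ (1 + μ) * (decyclingCount E V1 V2 : ℝ)) ∧
    (missingCount E (inN E v ∪ CBset E v) (outN E v ∪ CAset E v) : ℝ) ≥
      (1 + μ) * (decyclingCount E (inN E v ∪ CBset E v) (outN E v ∪ CAset E v) : ℝ) := by
  have hpart := isPartitionAt_canonical h3 v
  have hn : (0 : ℝ) < (Cset E v).card := by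
    exact_mod_cast card_pos.2 (nonempty_iff_ne_empty.2 hC)
  have hcanonical : (missingCount E (inN E v ∪ CBset E v) (outN E v ∪ CAset E v) : ℝ) ≥
      (1 + μ) * (decyclingCount E (inN E v ∪ CBset E v) (outN E v ∪ CAset E v) : ℝ) := by
    rw [decyclingCount_canonical h3 v, Nat.cast_add]
    calc (1 + μ) * ((Msum E v : ℝ) + eCC E v)
        ≤ (1 + μ) * ((Cset E v).card * √(gmiss E v) + eCC E v) := by
          gcongr
          exact Msum_le_card_mul_sqrt_gmiss h3 v
      _ ≤ gmiss E v := mul_add_sqrt_le_of_threshold_le (by linarith) hn (Nat.cast_nonneg _) hg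
      _ ≤ _ := by exact_mod_cast gmiss_le_missingCount subset_union_left subset_union_left hpart.1
  exact ⟨⟨_, _, hpart, subset_union_left, subset_union_left, hcanonical⟩, hcanonical⟩

/-- Lemma 3 (modified Lemma 3.1): if `g(v)` is large enough in terms of `|C(v)|`,
`μ` and `e(v)`, then some partition (in fact the canonical partition at `v`) has
missing edges at least `(1+μ)` times the decycling edges. -/
theorem stmt2 (E : V → V → Prop) [DecidableRel E] (h3 : ThreeFree E)
    (μ : ℝ) (hμ0 : 0 ≤ μ) (hμ1 : μ ≤ 1) (v : V) (hC : Cset E v ≠ ∅)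
    (hg : (gmiss E v : ℝ) ≥ ((Cset E v).card : ℝ) ^ 2 * (1 + μ) *
      ((1 + μ + Real.sqrt ((1 + μ) ^ 2 +
          4 * (1 + μ) * (eCC E v : ℝ) / ((Cset E v).card : ℝ) ^ 2)) / 2 +
        (eCC E v : ℝ) / ((Cset E v).card : ℝ) ^ 2)) :
    (∃ (V1 V2 : Finset V), IsPartitionAt V1 V2 v ∧
      inN E v ⊆ V1 ∧ outN E v ⊆ V2 ∧
      (missingCount E V1 V2 : ℝ) ≥ (1 + μ) * (decyclingCount E V1 V2 : ℝ)) ∧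
    (missingCount E (inN E v ∪ CBset E v) (outN E v ∪ CAset E v) : ℝ) ≥
      (1 + μ) * (decyclingCount E (inN E v ∪ CBset E v) (outN E v ∪ CAset E v) : ℝ) :=
  stmt2_general E h3 μ hμ0 v hC hg
end

section
/- Let 0 ≤ μ ≤ 1 be real. Suppose that every 3-free finite simple digraph H with at least one vertex admits a vertex v and a partition V(H) = V1 ∪ V2 ∪ {v} with B(v) ⊆ V1 and A(v) ⊆ V2 such that the number of missing edges of the partition is at least (1+μ) times the number of decycling edges of the partition. Then every 3-free finite simple digraph G satisfies (1+μ)·β(G) ≤ γ(G). -/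
open Finset

variable {V : Type*}

variable [Fintype V] [DecidableEq V]

universe u

/-!
Induction on the number of vertices, splitting `G` along a good partition `V1 ∪ V2 ∪ {v}`.
Nonadjacent pairs are either inside `V1`, inside `V2`, or missing edges of the partition, so
`γ(G) = γ(G[V1]) + γ(G[V2]) + #missing`. Deleting optimal decycling sets of `G[V1]` and `G[V2]`
together with all edges from `V2` to `V1` leaves `G` acyclic: every remaining edge goes weakly
forward in the order `V1 < v < V2` (as `B(v) ⊆ V1` and `A(v) ⊆ V2`), so a cycle would lie inside
`G[V1]` or `G[V2]`. Hence `β(G) ≤ β(G[V1]) + β(G[V2]) + #decycling`, and the hypothesis on the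
partition combines the two with the induction hypothesis for the 3-free induced subdigraphs.
-/

instance {α : Type*} (r : α → α → Prop) [DecidableRel r] (p : α → Prop) :
    DecidableRel (Subrel r p) :=
  fun a b => inferInstanceAs (Decidable (r a.1 b.1))

theorem ThreeFree.subrel {α : Type*} {r : α → α → Prop} (h : ThreeFree r) (p : α → Prop) :
    ThreeFree (Subrel r p) :=
  ⟨fun a => h.1 a, fun a b => h.2.1 a b, fun a b c => h.2.2 a b c⟩

theorem Acyclic.mono {α : Type*} {r s : α → α → Prop} (hs : Acyclic s) (hrs : r ≤ s) :
    Acyclic r :=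
  fun a ha => hs a (Relation.TransGen.mono hrs a a ha)

theorem acyclic_of_rank {α : Type*} {r : α → α → Prop} (g : α → ℕ)
    (hg : ∀ a b, r a b → g a < g b) : Acyclic r := fun a ha => by
  have : Relation.TransGen (· < ·) (g a) (g a) := Relation.TransGen.lift g hg a a ha
  rw [Relation.transGen_eq_self] at this
  exact lt_irrefl _ this

theorem Acyclic.exists_rank {α : Type*} [Fintype α] {r : α → α → Prop} (h : Acyclic r) :
    ∃ g : α → ℕ, ∀ a b, r a b → g a < g b := by
  classical
  refine ⟨fun a => (univ.filter fun c => Relation.TransGen r c a).card, fun a b hab => ?_⟩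
  have hsub : (univ.filter fun c => Relation.TransGen r c a) ⊆
      univ.filter fun c => Relation.TransGen r c b := by
    intro c
    simpa using fun hc => hc.tail hab
  exact card_lt_card <| (ssubset_iff_of_subset hsub).2
    ⟨a, by simpa using Relation.TransGen.single hab, by simpa using h a⟩

theorem even_card_of_swap_mem {α : Type*} {s : Finset (α × α)}
    (hswap : ∀ p ∈ s, p.swap ∈ s) (hdiag : ∀ p ∈ s, p.1 ≠ p.2) : Even s.card := by
  have hsum : ∑ _p ∈ s, (1 : ZMod 2) = 0 :=
    sum_involution (fun p _ => p.swap) (fun _ _ => rfl)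
      (fun p hp _ h => hdiag p hp (congrArg Prod.snd h)) hswap (fun p _ => p.swap_swap)
  simpa [ZMod.natCast_eq_zero_iff_even] using hsum

theorem card_filter_add_card_filter_add_card_filter_nor {α : Type*} (s : Finset α)
    (p q : α → Prop) [DecidablePred p] [DecidablePred q] (hpq : ∀ a ∈ s, p a → ¬ q a) :
    (s.filter p).card + (s.filter q).card + (s.filter fun a => ¬ p a ∧ ¬ q a).card = s.card := by
  classical
  rw [← card_union_of_disjoint (disjoint_filter.2 hpq), ← filter_or,
    ← card_filter_add_card_filter_not (s := s) (p := fun a => p a ∨ q a)]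
  simp only [not_or]

section Pairs

variable {W : Type*} [Fintype W] [DecidableEq W] (F : W → W → Prop) [DecidableRel F]

def nonadjPairs : Finset (W × W) :=
  univ.filter fun p => p.1 ≠ p.2 ∧ ¬ F p.1 p.2 ∧ ¬ F p.2 p.1

theorem even_card_filter_nonadjPairs (q : W × W → Prop) [DecidablePred q]
    (hq : ∀ p, q p → q p.swap) : Even ((nonadjPairs F).filter q).card :=
  even_card_of_swap_mem (fun p hp => by simp_all [nonadjPairs, eq_comm])
    (fun p hp => by simp_all [nonadjPairs])

theorem missingCount_eq_card_div_two (V1 V2 : Finset W) :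
    missingCount F V1 V2 = ((nonadjPairs F).filter fun p =>
      ¬ (p.1 ∈ V1 ∧ p.2 ∈ V1) ∧ ¬ (p.1 ∈ V2 ∧ p.2 ∈ V2)).card / 2 := by
  simp only [missingCount, nonadjPairs, filter_filter, and_assoc]

theorem gamma_subrel_eq_card_div_two (S : Finset W) :
    gamma (Subrel F (· ∈ S)) = ((nonadjPairs F).filter fun p => p.1 ∈ S ∧ p.2 ∈ S).card / 2 := by
  let e : {x // x ∈ S} ↪ W := Function.Embedding.subtype _
  have hmap : (nonadjPairs (Subrel F (· ∈ S))).map (e.prodMap e) =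
      (nonadjPairs F).filter fun p => p.1 ∈ S ∧ p.2 ∈ S := by
    ext ⟨a, b⟩
    simp only [nonadjPairs, mem_map, mem_filter, mem_univ, true_and, Prod.exists,
      Function.Embedding.prodMap, Function.Embedding.coeFn_mk, Prod.map, Prod.mk.injEq]
    constructor
    · rintro ⟨a, b, ⟨hne, hab, hba⟩, rfl, rfl⟩
      exact ⟨⟨fun h => hne (Subtype.ext h), hab, hba⟩, a.2, b.2⟩
    · rintro ⟨⟨hne, hab, hba⟩, ha, hb⟩
      exact ⟨⟨a, ha⟩, ⟨b, hb⟩, ⟨fun h => hne (congrArg Subtype.val h), hab, hba⟩, rfl, rfl⟩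
  rw [gamma, ← nonadjPairs, ← hmap, card_map]

theorem gamma_eq_add_missingCount {V1 V2 : Finset W} (hdisj : Disjoint V1 V2) :
    gamma F = gamma (Subrel F (· ∈ V1)) + gamma (Subrel F (· ∈ V2)) + missingCount F V1 V2 := by
  have hsplit := card_filter_add_card_filter_add_card_filter_nor (nonadjPairs F)
    (fun p => p.1 ∈ V1 ∧ p.2 ∈ V1) (fun p => p.1 ∈ V2 ∧ p.2 ∈ V2)
    (fun p _ h1 h2 => disjoint_left.1 hdisj h1.1 h2.1)
  -- each part is closed under swapping, hence even, so halving is additive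
  obtain ⟨k1, hk1⟩ := even_card_filter_nonadjPairs F (fun p => p.1 ∈ V1 ∧ p.2 ∈ V1)
    (fun _ h => h.symm)
  obtain ⟨k2, hk2⟩ := even_card_filter_nonadjPairs F (fun p => p.1 ∈ V2 ∧ p.2 ∈ V2)
    (fun _ h => h.symm)
  obtain ⟨k3, hk3⟩ := even_card_filter_nonadjPairs F
    (fun p => ¬ (p.1 ∈ V1 ∧ p.2 ∈ V1) ∧ ¬ (p.1 ∈ V2 ∧ p.2 ∈ V2))
    (fun _ h => ⟨fun h' => h.1 h'.symm, fun h' => h.2 h'.symm⟩)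
  rw [gamma_subrel_eq_card_div_two, gamma_subrel_eq_card_div_two, missingCount_eq_card_div_two,
    gamma, ← nonadjPairs]
  omega

end Pairs

theorem IsPartitionAt.mem_or_mem_or_eq {W : Type*} [Fintype W] [DecidableEq W]
    {V1 V2 : Finset W} {v : W} (h : IsPartitionAt V1 V2 v) (u : W) :
    u ∈ V1 ∨ u ∈ V2 ∨ u = v := by
  have hu : u ∈ V1 ∪ V2 ∪ {v} := h.2.2.2 ▸ mem_univ u
  simp only [mem_union, mem_singleton] at hu
  tauto

section Beta

variable {W : Type*} [Fintype W]

theorem acyclic_of_isPartitionAt [DecidableEq W] {r : W → W → Prop} {V1 V2 : Finset W}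
    {v : W} (hpart : IsPartitionAt V1 V2 v) (hin : ∀ a, r a v → a ∈ V1)
    (hout : ∀ b, r v b → b ∈ V2) (hback : ∀ a ∈ V2, ∀ b ∈ V1, ¬ r a b)
    (h1 : Acyclic (Subrel r (· ∈ V1))) (h2 : Acyclic (Subrel r (· ∈ V2))) : Acyclic r := by
  obtain ⟨hdisj, hv1, hv2, -⟩ := id hpart
  obtain ⟨g1, hg1⟩ := h1.exists_rank
  obtain ⟨g2, hg2⟩ := h2.exists_rank
  set N := univ.sup g1 + 1
  have hN (a) : g1 a < N := Nat.lt_succ_of_le (le_sup (mem_univ a))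
  set g : W → ℕ := fun u =>
    if h : u ∈ V1 then g1 ⟨u, h⟩ else if h : u ∈ V2 then N + 1 + g2 ⟨u, h⟩ else N
  have hgV1 (u) (hu : u ∈ V1) : g u = g1 ⟨u, hu⟩ := dif_pos hu
  have hgV2 (u) (hu : u ∈ V2) : g u = N + 1 + g2 ⟨u, hu⟩ := by
    simp only [g, dif_neg (disjoint_right.1 hdisj hu), dif_pos hu]
  have hgv : g v = N := by simp [g, hv1, hv2]
  refine acyclic_of_rank g fun a b hab => ?_
  rcases hpart.mem_or_mem_or_eq a with ha | ha | rfl <;>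
    rcases hpart.mem_or_mem_or_eq b with hb | hb | rfl
  · rw [hgV1 a ha, hgV1 b hb]; exact hg1 ⟨a, ha⟩ ⟨b, hb⟩ hab
  · rw [hgV1 a ha, hgV2 b hb]; have := hN ⟨a, ha⟩; omega
  · rw [hgV1 a ha, hgv]; exact hN ⟨a, ha⟩
  · exact (hback a ha b hb hab).elim
  · rw [hgV2 a ha, hgV2 b hb]; have := hg2 ⟨a, ha⟩ ⟨b, hb⟩ hab; omega
  · exact (disjoint_left.1 hdisj (hin a hab) ha).elim
  · exact (disjoint_left.1 hdisj hb (hout b hab)).elim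
  · rw [hgV2 b hb, hgv]; omega
  · exact (hv1 (hin _ hab)).elim

variable {F : W → W → Prop} [DecidableRel F]

theorem beta_le_card {X : Finset (W × W)} (hX : X ⊆ edgeFinset F)
    (h : Acyclic fun a b => F a b ∧ (a, b) ∉ X) : beta F ≤ X.card :=
  Nat.sInf_le ⟨X, hX, rfl, h⟩

variable (F) in
theorem exists_card_eq_beta :
    ∃ X ⊆ edgeFinset F, X.card = beta F ∧ Acyclic fun a b => F a b ∧ (a, b) ∉ X := by
  have hne : {n | ∃ X ⊆ edgeFinset F, X.card = n ∧
      Acyclic fun a b => F a b ∧ (a, b) ∉ X}.Nonempty :=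
    ⟨_, edgeFinset F, subset_rfl, rfl, acyclic_of_rank (fun _ => 0)
      fun _ _ h => (h.2 (by simpa [edgeFinset] using h.1)).elim⟩
  exact Nat.sInf_mem hne

theorem beta_le_add_decyclingCount [DecidableEq W] {V1 V2 : Finset W} {v : W}
    (hpart : IsPartitionAt V1 V2 v) (hin : inN F v ⊆ V1) (hout : outN F v ⊆ V2) :
    beta F ≤ beta (Subrel F (· ∈ V1)) + beta (Subrel F (· ∈ V2)) + decyclingCount F V1 V2 := by
  obtain ⟨X1, hX1, hcard1, hac1⟩ := exists_card_eq_beta (Subrel F (· ∈ V1))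
  obtain ⟨X2, hX2, hcard2, hac2⟩ := exists_card_eq_beta (Subrel F (· ∈ V2))
  let val (S : Finset W) : S × S ↪ W × W :=
    (Function.Embedding.subtype _).prodMap (Function.Embedding.subtype _)
  set D := (V2 ×ˢ V1).filter fun p => F p.1 p.2
  set X := X1.map (val V1) ∪ X2.map (val V2) ∪ D
  have hX : X ⊆ edgeFinset F := by
    intro p hp
    simp only [X, D, mem_union, mem_map, mem_filter] at hp
    rcases hp with (⟨q, hq, rfl⟩ | ⟨q, hq, rfl⟩) | ⟨-, hp⟩
    · simpa [edgeFinset, val] using hX1 hq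
    · simpa [edgeFinset, val] using hX2 hq
    · simpa [edgeFinset] using hp
  have hac : Acyclic fun a b => F a b ∧ (a, b) ∉ X := by
    refine acyclic_of_isPartitionAt hpart (fun a hab => hin (by simpa [inN] using hab.1))
      (fun b hab => hout (by simpa [outN] using hab.1))
      (fun a ha b hb hab => hab.2 (mem_union_right _ (by simp [D, ha, hb, hab.1])))
      (hac1.mono fun a b hab => ⟨hab.1, fun h => hab.2 ?_⟩)
      (hac2.mono fun a b hab => ⟨hab.1, fun h => hab.2 ?_⟩)
    · exact mem_union_left _ (mem_union_left _ (mem_map_of_mem (val V1) h))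
    · exact mem_union_left _ (mem_union_right _ (mem_map_of_mem (val V2) h))
  calc beta F ≤ X.card := beta_le_card hX hac
    _ ≤ (X1.map (val V1)).card + (X2.map (val V2)).card + D.card :=
        (card_union_le _ _).trans (by gcongr; exact card_union_le _ _)
    _ = _ := by rw [card_map, card_map, hcard1, hcard2]; rfl

end Beta

theorem mul_beta_le_gamma_of_forall_partition {c : ℝ} (hc : 0 ≤ c)
    (hexists : ∀ (W : Type u) [Fintype W] [DecidableEq W] (F : W → W → Prop) [DecidableRel F],
      Nonempty W → ThreeFree F → ∃ (v : W) (W1 W2 : Finset W), IsPartitionAt W1 W2 v ∧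
        inN F v ⊆ W1 ∧ outN F v ⊆ W2 ∧ c * decyclingCount F W1 W2 ≤ missingCount F W1 W2)
    {W : Type u} [Fintype W] [DecidableEq W] (F : W → W → Prop) [DecidableRel F]
    (h3 : ThreeFree F) : c * beta F ≤ gamma F := by
  induction hn : Fintype.card W using Nat.strong_induction_on generalizing W with
  | _ n ih =>
  rcases isEmpty_or_nonempty W with hW | hW
  · have : beta F = 0 := Nat.le_zero.1 (beta_le_card (empty_subset _) fun a => isEmptyElim a)
    simp [this]
  obtain ⟨v, V1, V2, hvpart, hin, hout, hgood⟩ := hexists W F hW h3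
  have hcard (S : Finset W) (hv : v ∉ S) : Fintype.card S < n := by
    rw [← hn, Fintype.card_coe, ← card_univ]
    exact card_lt_card (ssubset_univ_iff.2 fun h => hv (h ▸ mem_univ v))
  have ih1 := ih _ (hcard V1 hvpart.2.1) (Subrel F (· ∈ V1)) (h3.subrel _) rfl
  have ih2 := ih _ (hcard V2 hvpart.2.2.1) (Subrel F (· ∈ V2)) (h3.subrel _) rfl
  have hbeta : (beta F : ℝ) ≤
      beta (Subrel F (· ∈ V1)) + beta (Subrel F (· ∈ V2)) + decyclingCount F V1 V2 := by
    exact_mod_cast beta_le_add_decyclingCount hvpart hin hout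
  have hgamma : (gamma F : ℝ) =
      gamma (Subrel F (· ∈ V1)) + gamma (Subrel F (· ∈ V2)) + missingCount F V1 V2 := by
    exact_mod_cast gamma_eq_add_missingCount F hvpart.1
  have hcbeta := mul_le_mul_of_nonneg_left hbeta hc
  rw [mul_add, mul_add] at hcbeta
  linarith

theorem stmt4_general {V' : Type u} [Fintype V'] [DecidableEq V']
    (E : V' → V' → Prop) [DecidableRel E]
    (μ : ℝ) (hμ0 : 0 ≤ μ)
    (hyp : ∀ (W : Type u) [Fintype W] [DecidableEq W]
      (F : W → W → Prop) [DecidableRel F], Nonempty W → ThreeFree F →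
      ∃ (v : W) (W1 W2 : Finset W), IsPartitionAt W1 W2 v ∧
        inN F v ⊆ W1 ∧ outN F v ⊆ W2 ∧
        (missingCount F W1 W2 : ℝ) ≥ (1 + μ) * (decyclingCount F W1 W2 : ℝ))
    (h3 : ThreeFree E) :
    (1 + μ) * (beta E : ℝ) ≤ (gamma E : ℝ) :=
  mul_beta_le_gamma_of_forall_partition (by linarith) hyp E h3

/-- The induction argument: if every `3`-free digraph with at least one vertex
admits a good partition (missing edges at least `(1+μ)` times decycling edges),
then `(1+μ) β(G) ≤ γ(G)` for every `3`-free digraph `G`. -/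
theorem stmt4 {V' : Type u} [Fintype V'] [DecidableEq V']
    (E : V' → V' → Prop) [DecidableRel E]
    (μ : ℝ) (hμ0 : 0 ≤ μ) (hμ1 : μ ≤ 1)
    (hyp : ∀ (W : Type u) [Fintype W] [DecidableEq W]
      (F : W → W → Prop) [DecidableRel F], Nonempty W → ThreeFree F →
      ∃ (v : W) (W1 W2 : Finset W), IsPartitionAt W1 W2 v ∧
        inN F v ⊆ W1 ∧ outN F v ⊆ W2 ∧
        (missingCount F W1 W2 : ℝ) ≥ (1 + μ) * (decyclingCount F W1 W2 : ℝ))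
    (h3 : ThreeFree E) :
    (1 + μ) * (beta E : ℝ) ≤ (gamma E : ℝ) :=
  stmt4_general E μ hμ0 hyp h3
end

section
/- Let G be a finite simple digraph, v a vertex, and V = V1 ∪ V2 ∪ {v} a partition of the vertex set into disjoint parts such that every in-neighbor of v lies in V1 and every out-neighbor of v lies in V2. Then β(G) ≤ β(G[V1]) + β(G[V2]) + τ, where τ is the number of edges of G from a vertex of V2 to a vertex of V1 and G[Vi] denotes the subdigraph induced by Vi. -/
open Finset

variable {V : Type*}

variable [Fintype V] [DecidableEq V]

/-! A digraph is acyclic iff its vertices can be ranked so that every edge goes up in rank.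
Given optimal decycling sets `X1` of `G[V1]` and `X2` of `G[V2]`, delete them together with the
`τ` edges from `V2` to `V1`. What remains is acyclic: rank a vertex of `V1` by `(0, r₁)`, the
vertex `v` by `(1, 0)` and a vertex of `V2` by `(2, r₂)` in the lexicographic order, where `r₁`,
`r₂` are ranks of the acyclic digraphs `G[V1] ∖ X1` and `G[V2] ∖ X2`; the hypotheses on `v` say
that its edges go from `V1` to `v` to `V2`. -/

def deleteEdges {α : Type*} (E : α → α → Prop) (X : Finset (α × α)) : α → α → Prop :=
  fun a b => E a b ∧ (a, b) ∉ X

section Acyclic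

variable {α : Type*} {R : α → α → Prop}

theorem acyclic_of_forall_lt {β : Type*} [Preorder β] (f : α → β)
    (hf : ∀ a b, R a b → f a < f b) : Acyclic R := fun a ha =>
  lt_irrefl (f a) <| by
    simpa only [Relation.transGen_eq_self] using
      Relation.TransGen.lift (p := (· < ·)) f hf a a ha

/-- Rank a vertex by the number of vertices from which it can be reached. -/
theorem Acyclic.exists_forall_lt [Finite α] (hR : Acyclic R) :
    ∃ f : α → ℕ, ∀ a b, R a b → f a < f b := by
  refine ⟨fun u => {x | Relation.ReflTransGen R x u}.ncard, fun a b hab => ?_⟩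
  refine Set.ncard_lt_ncard ⟨fun x hx => hx.tail hab, fun hsub => ?_⟩ (Set.toFinite _)
  exact hR a (Relation.TransGen.head' hab (hsub Relation.ReflTransGen.refl))

end Acyclic

section Beta

variable {α : Type*} [Fintype α] (R : α → α → Prop) [DecidableRel R]

theorem exists_acyclic_deleteEdges_card_eq_beta :
    ∃ X ⊆ edgeFinset R, X.card = beta R ∧ Acyclic (deleteEdges R X) := by
  refine Nat.sInf_mem (s := {n | ∃ X ⊆ edgeFinset R, X.card = n ∧ Acyclic (deleteEdges R X)})
    ⟨_, edgeFinset R, subset_rfl, rfl, ?_⟩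
  refine acyclic_of_forall_lt (fun _ => 0) fun a b hab => absurd ?_ hab.2
  simpa [edgeFinset] using hab.1

/-- `X` need not consist of edges of `R`: its intersection with them does the same job. -/
theorem beta_le_card_s5 [DecidableEq α] {X : Finset (α × α)} (hX : Acyclic (deleteEdges R X)) :
    beta R ≤ X.card := by
  have hmem : (X ∩ edgeFinset R).card ∈
      {n | ∃ Y ⊆ edgeFinset R, Y.card = n ∧ Acyclic (deleteEdges R Y)} := by
    refine ⟨X ∩ edgeFinset R, inter_subset_right, rfl, ?_⟩
    convert hX using 1
    funext a b
    simp only [deleteEdges, edgeFinset, mem_inter, mem_filter, mem_univ, true_and]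
    exact propext (by tauto)
  exact (Nat.sInf_le hmem).trans (card_le_card inter_subset_left)

end Beta

section LiftEdges

variable {α : Type*} [DecidableEq α] {S : Finset α}

def liftEdges (X : Finset (S × S)) : Finset (α × α) :=
  X.image fun p => (p.1.1, p.2.1)

theorem mem_liftEdges {X : Finset (S × S)} {a b : α} (ha : a ∈ S) (hb : b ∈ S) :
    (a, b) ∈ liftEdges X ↔ (⟨a, ha⟩, ⟨b, hb⟩) ∈ X := by
  simp [liftEdges, ha, hb]

theorem card_liftEdges_le (X : Finset (S × S)) : (liftEdges X).card ≤ X.card :=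
  card_image_le

end LiftEdges

section Partition

variable {V1 V2 : Finset V} {v : V}

theorem IsPartitionAt.mem_or_mem_or_eq_s5 (hpart : IsPartitionAt V1 V2 v) (u : V) :
    u ∈ V1 ∨ u ∈ V2 ∨ u = v := by
  have : u ∈ V1 ∪ V2 ∪ {v} := hpart.2.2.2 ▸ mem_univ u
  simp only [mem_union, mem_singleton] at this
  tauto

def backEdges (E : V → V → Prop) [DecidableRel E] (V1 V2 : Finset V) : Finset (V × V) :=
  (V2 ×ˢ V1).filter fun p => E p.1 p.2

theorem acyclic_deleteEdges_of_isPartitionAt (E : V → V → Prop) [DecidableRel E]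
    (hpart : IsPartitionAt V1 V2 v) (hin : ∀ w, E w v → w ∈ V1) (hout : ∀ w, E v w → w ∈ V2)
    {X1 : Finset (V1 × V1)} {X2 : Finset (V2 × V2)}
    (hX1 : Acyclic (deleteEdges (fun a b : V1 => E a b) X1))
    (hX2 : Acyclic (deleteEdges (fun a b : V2 => E a b) X2)) :
    Acyclic (deleteEdges E (liftEdges X1 ∪ liftEdges X2 ∪ backEdges E V1 V2)) := by
  obtain ⟨r1, hr1⟩ := hX1.exists_forall_lt
  obtain ⟨r2, hr2⟩ := hX2.exists_forall_lt
  have hmem := hpart.mem_or_mem_or_eq_s5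
  obtain ⟨hV, hv1, hv2, -⟩ := hpart
  have hdis := disjoint_right.1 hV
  let rank : V → ℕ ×ₗ ℕ := fun u =>
    if h : u ∈ V1 then toLex (0, r1 ⟨u, h⟩)
    else if h : u ∈ V2 then toLex (2, r2 ⟨u, h⟩) else toLex (1, 0)
  refine acyclic_of_forall_lt rank fun a b ⟨hab, hX⟩ => ?_
  simp only [mem_union, not_or] at hX
  obtain ⟨⟨hX1ab, hX2ab⟩, hback⟩ := hX
  rcases hmem a with ha | ha | rfl
  · rcases hmem b with hb | hb | rfl
    · have := hr1 ⟨a, ha⟩ ⟨b, hb⟩ ⟨hab, (mem_liftEdges ha hb).not.1 hX1ab⟩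
      simp [rank, ha, hb, Prod.Lex.toLex_lt_toLex, this]
    · simp [rank, ha, hb, hdis hb, Prod.Lex.toLex_lt_toLex]
    · simp [rank, ha, hv1, hv2, Prod.Lex.toLex_lt_toLex]
  · rcases hmem b with hb | hb | rfl
    · exact absurd (by simp [backEdges, ha, hb, hab]) hback
    · have := hr2 ⟨a, ha⟩ ⟨b, hb⟩ ⟨hab, (mem_liftEdges ha hb).not.1 hX2ab⟩
      simp [rank, ha, hb, hdis ha, hdis hb, Prod.Lex.toLex_lt_toLex, this]
    · exact absurd (hin a hab) (hdis ha)
  · have hb := hout b hab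
    simp [rank, hb, hdis hb, hv1, hv2, Prod.Lex.toLex_lt_toLex]

end Partition

theorem stmt5_general (E : V → V → Prop) [DecidableRel E]
    (v : V) (V1 V2 : Finset V) (hpart : IsPartitionAt V1 V2 v)
    (hin : ∀ w, E w v → w ∈ V1) (hout : ∀ w, E v w → w ∈ V2) :
    beta E ≤ beta (fun a b : V1 => E a b) + beta (fun a b : V2 => E a b) +
      decyclingCount E V1 V2 := by
  obtain ⟨X1, -, hX1card, hX1⟩ := exists_acyclic_deleteEdges_card_eq_beta fun a b : V1 => E a b
  obtain ⟨X2, -, hX2card, hX2⟩ := exists_acyclic_deleteEdges_card_eq_beta fun a b : V2 => E a b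
  calc beta E ≤ (liftEdges X1 ∪ liftEdges X2 ∪ backEdges E V1 V2).card :=
        beta_le_card_s5 E (acyclic_deleteEdges_of_isPartitionAt E hpart hin hout hX1 hX2)
    _ ≤ (liftEdges X1).card + (liftEdges X2).card + (backEdges E V1 V2).card :=
        (card_union_le _ _).trans (by gcongr; exact card_union_le _ _)
    _ ≤ X1.card + X2.card + decyclingCount E V1 V2 :=
        add_le_add (add_le_add (card_liftEdges_le X1) (card_liftEdges_le X2)) le_rfl
    _ = _ := by rw [hX1card, hX2card]

/-- If `V1, V2, {v}` is a partition with all in-neighbors of `v` in `V1` and all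
out-neighbors of `v` in `V2`, then `β(G) ≤ β(G[V1]) + β(G[V2]) + τ`, where `τ` is
the number of edges from `V2` to `V1`. -/
theorem stmt5 (E : V → V → Prop) [DecidableRel E] (hsimple : ∀ a, ¬ E a a)
    (v : V) (V1 V2 : Finset V) (hpart : IsPartitionAt V1 V2 v)
    (hin : ∀ w, E w v → w ∈ V1) (hout : ∀ w, E v w → w ∈ V2) :
    beta E ≤ beta (fun a b : V1 => E a b) + beta (fun a b : V2 => E a b) +
      decyclingCount E V1 V2 :=
  stmt5_general E v V1 V2 hpart hin hout
end

section
/- Let G be a 3-free finite simple digraph and v a vertex of G. Then |C(v)|·g(v) ≥ Σ_{u ∈ C(v)} k_v(u)·l_v(u). -/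
/-!
If `a ∈ A(v)` and `b ∈ B(v)` have a common vertex `u` with `a → u → b`, then `a` and `b` are
nonadjacent: `a → b` would close the triangle `v a b`, and `b → a` the triangle `a u b`.
Hence `k_v(u) l_v(u) ≤ g(v)` for every vertex `u`, and summing over `C(v)` gives the claim.
-/

open Finset

variable {V : Type*}

variable [Fintype V] [DecidableEq V]

/-- In a `3`-free digraph, `|C(v)| g(v) ≥ ∑_{u ∈ C(v)} k_v(u) l_v(u)`. -/
theorem stmt7 (E : V → V → Prop) [DecidableRel E] (h3 : ThreeFree E) (v : V) :
    (Cset E v).card * gmiss E v ≥ ∑ u ∈ Cset E v, kdeg E v u * ldeg E v u := by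
  have kdeg_mul_ldeg_le_gmiss (u : V) : kdeg E v u * ldeg E v u ≤ gmiss E v := by
    have hsub : (outN E v).filter (E · u) ×ˢ (inN E v).filter (E u ·) ⊆
        ((outN E v) ×ˢ (inN E v)).filter fun p => ¬ E p.1 p.2 ∧ ¬ E p.2 p.1 := by
      rintro ⟨a, b⟩ hab
      simp only [mem_product, mem_filter, outN, inN, mem_univ, true_and] at hab ⊢
      obtain ⟨⟨hva, hau⟩, hbv, hub⟩ := hab
      exact ⟨⟨hva, hbv⟩, fun hab => h3.2.2 v a b hva hab hbv, h3.2.2 a u b hau hub⟩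
    rw [kdeg, ldeg, gmiss, ← card_product]
    exact card_le_card hsub
  exact sum_le_card_nsmul _ _ _ fun u _ => kdeg_mul_ldeg_le_gmiss u
end

section
/- Let G be a 3-free finite simple digraph and v a vertex of G with C(v) ≠ ∅. Then |C(v)|²·g(v) ≥ M(v)², where M(v) = Σ_{u ∈ C(v)} min(k_v(u), l_v(u)). -/
open Finset

variable {V : Type*}

variable [Fintype V] [DecidableEq V]

theorem kdeg_mul_ldeg_le_gmiss {W : Type*} [Fintype W] (E : W → W → Prop) [DecidableRel E]
    (htri : ∀ a b c, E a b → E b c → ¬ E c a) (v u : W) :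
    kdeg E v u * ldeg E v u ≤ gmiss E v := by
  rw [kdeg, ldeg, gmiss, ← card_product, ← filter_product]
  refine card_le_card fun p hp => ?_
  simp only [mem_filter, mem_product, outN, inN, mem_univ, true_and] at hp ⊢
  obtain ⟨⟨hvw, hbv⟩, hwu, hub⟩ := hp
  -- `w → b` would close the triangle `v → w → b → v`, and `b → w` the triangle `u → b → w → u`.
  exact ⟨⟨hvw, hbv⟩, htri p.2 v p.1 hbv hvw, fun hwb => htri u p.2 p.1 hub hwb hwu⟩

theorem sum_min_sq_le_card_mul_gmiss {W : Type*} [Fintype W] (E : W → W → Prop)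
    [DecidableRel E] (htri : ∀ a b c, E a b → E b c → ¬ E c a) (v : W) (S : Finset W) :
    ∑ u ∈ S, min (kdeg E v u) (ldeg E v u) ^ 2 ≤ #S * gmiss E v :=
  calc ∑ u ∈ S, min (kdeg E v u) (ldeg E v u) ^ 2
      ≤ ∑ u ∈ S, kdeg E v u * ldeg E v u :=
        sum_le_sum fun _ _ =>
          (sq _).trans_le (Nat.mul_le_mul (min_le_left _ _) (min_le_right _ _))
    _ ≤ ∑ _u ∈ S, gmiss E v := sum_le_sum fun u _ => kdeg_mul_ldeg_le_gmiss E htri v u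
    _ = #S * gmiss E v := by rw [sum_const, smul_eq_mul]

theorem stmt8_general (E : V → V → Prop) [DecidableRel E] (h3 : ThreeFree E) (v : V) :
    (Cset E v).card ^ 2 * gmiss E v ≥ (Msum E v) ^ 2 :=
  calc (Msum E v) ^ 2
      ≤ #(Cset E v) * ∑ u ∈ Cset E v, min (kdeg E v u) (ldeg E v u) ^ 2 :=
        sq_sum_le_card_mul_sum_sq
    _ ≤ #(Cset E v) * (#(Cset E v) * gmiss E v) :=
        Nat.mul_le_mul_left _ (sum_min_sq_le_card_mul_gmiss E h3.2.2 v _)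
    _ = (Cset E v).card ^ 2 * gmiss E v := by ring

/-- In a `3`-free digraph with `C(v) ≠ ∅`, `|C(v)|² g(v) ≥ M(v)²`. -/
theorem stmt8 (E : V → V → Prop) [DecidableRel E] (h3 : ThreeFree E) (v : V)
    (hC : Cset E v ≠ ∅) :
    (Cset E v).card ^ 2 * gmiss E v ≥ (Msum E v) ^ 2 :=
  stmt8_general E h3 v
end

section
/- Let G be a 3-free finite simple digraph and v a vertex of G. For the canonical partition at v (V1 = B(v) ∪ C_{B(v)}, V2 = A(v) ∪ C_{A(v)}), the number of edges of G from a vertex of V2 to a vertex of V1 equals M(v) + e(v), where M(v) = Σ_{u ∈ C(v)} min(k_v(u), l_v(u)). -/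
open Finset

variable {V : Type*}

variable [Fintype V] [DecidableEq V]

/-!
Split the edges from `V2` to `V1` into four blocks. There is no edge from `A(v)` to `B(v)`, as it
would close a triangle through `v`. Into `u ∈ C_{B(v)}` come `k_v(u) = min(k_v(u), l_v(u))` edges
from `A(v)`; out of `u ∈ C_{A(v)}` go `l_v(u) = min(k_v(u), l_v(u))` edges into `B(v)`; and the
edges from `C_{A(v)}` to `C_{B(v)}` are counted by `e(v)`.
-/

section DecyclingCount

variable {α : Type*} (E : α → α → Prop) [DecidableRel E]

lemma decyclingCount_union_left [DecidableEq α] {s₁ s₂ : Finset α} (h : Disjoint s₁ s₂)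
    (t : Finset α) :
    decyclingCount E (s₁ ∪ s₂) t = decyclingCount E s₁ t + decyclingCount E s₂ t := by
  unfold decyclingCount
  rw [product_union, filter_union, card_union_of_disjoint]
  exact disjoint_filter_filter (disjoint_product.mpr (Or.inr h))

lemma decyclingCount_union_right [DecidableEq α] (s : Finset α) {t₁ t₂ : Finset α}
    (h : Disjoint t₁ t₂) :
    decyclingCount E s (t₁ ∪ t₂) = decyclingCount E s t₁ + decyclingCount E s t₂ := by
  unfold decyclingCount
  rw [union_product, filter_union, card_union_of_disjoint]
  exact disjoint_filter_filter (disjoint_product.mpr (Or.inl h))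

lemma decyclingCount_eq_sum_out (s t : Finset α) :
    decyclingCount E s t = ∑ a ∈ t, (s.filter fun b => E a b).card := by
  rw [decyclingCount, card_filter, sum_product]
  exact sum_congr rfl fun _ _ => (card_filter _ _).symm

lemma decyclingCount_eq_sum_in (s t : Finset α) :
    decyclingCount E s t = ∑ b ∈ s, (t.filter fun a => E a b).card := by
  rw [decyclingCount, card_filter, sum_product_right]
  exact sum_congr rfl fun _ _ => (card_filter _ _).symm

end DecyclingCount

lemma decyclingCount_inN_outN_eq_zero {α : Type*} [Fintype α] {E : α → α → Prop}
    [DecidableRel E] (hE : ∀ a b c, E a b → E b c → ¬ E c a) (v : α) :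
    decyclingCount E (inN E v) (outN E v) = 0 := by
  refine card_eq_zero.mpr (filter_eq_empty_iff.mpr ?_)
  rintro ⟨a, b⟩ hab hE_ab
  obtain ⟨ha, hb⟩ := mem_product.mp hab
  exact hE v a b (mem_filter.mp ha).2 hE_ab (mem_filter.mp hb).2

section CanonicalPartition

variable {α : Type*} [Fintype α] [DecidableEq α] (E : α → α → Prop) [DecidableRel E]
  (v : α)

lemma disjoint_outN_Cset : Disjoint (outN E v) (Cset E v) :=
  disjoint_left.mpr fun _ ha hc => (mem_sdiff.mp hc).2 (by simp [ha])

lemma disjoint_inN_Cset : Disjoint (inN E v) (Cset E v) :=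
  disjoint_left.mpr fun _ hb hc => (mem_sdiff.mp hc).2 (by simp [hb])

lemma disjoint_outN_CAset : Disjoint (outN E v) (CAset E v) :=
  (disjoint_outN_Cset E v).mono_right sdiff_subset

lemma disjoint_inN_CBset : Disjoint (inN E v) (CBset E v) :=
  (disjoint_inN_Cset E v).mono_right (filter_subset _ _)

lemma eCC_eq_decyclingCount : eCC E v = decyclingCount E (CBset E v) (CAset E v) :=
  rfl

lemma decyclingCount_CBset_outN :
    decyclingCount E (CBset E v) (outN E v) = ∑ u ∈ CBset E v, kdeg E v u :=
  decyclingCount_eq_sum_in E _ _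

lemma decyclingCount_inN_CAset :
    decyclingCount E (inN E v) (CAset E v) = ∑ u ∈ CAset E v, ldeg E v u :=
  decyclingCount_eq_sum_out E _ _

lemma Msum_eq_sum_CBset_add_sum_CAset :
    Msum E v = ∑ u ∈ CBset E v, kdeg E v u + ∑ u ∈ CAset E v, ldeg E v u := by
  rw [Msum, CAset, CBset, ← filter_not, ← sum_filter_add_sum_filter_not (Cset E v)
    (fun u => kdeg E v u < ldeg E v u)]
  congr 1
  · exact sum_congr rfl fun u hu => min_eq_left (mem_filter.mp hu).2.le
  · exact sum_congr rfl fun u hu => min_eq_right (not_lt.mp (mem_filter.mp hu).2)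

end CanonicalPartition

/-- For the canonical partition `V1 = B(v) ∪ C_{B(v)}`, `V2 = A(v) ∪ C_{A(v)}` of a
`3`-free digraph, the number of edges from `V2` to `V1` equals `M(v) + e(v)`. -/
theorem stmt9 (E : V → V → Prop) [DecidableRel E] (h3 : ThreeFree E) (v : V) :
    decyclingCount E (inN E v ∪ CBset E v) (outN E v ∪ CAset E v) =
      Msum E v + eCC E v := by
  rw [decyclingCount_union_left E (disjoint_inN_CBset E v),
    decyclingCount_union_right E _ (disjoint_outN_CAset E v),
    decyclingCount_union_right E _ (disjoint_outN_CAset E v),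
    decyclingCount_inN_outN_eq_zero h3.2.2, decyclingCount_inN_CAset,
    decyclingCount_CBset_outN, Msum_eq_sum_CBset_add_sum_CAset, eCC_eq_decyclingCount]
  ring
end
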